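/- arXiv:1402.3210 — 3 statements merged into one kernel-verified Lean document; each statement's English description precedes it below -/
import Mathlib

section
/- Let A be a nonzero real m×n matrix, θ_s, θ_x ∈ (0,1], τ₀ > 0, v_w > 0, and let (τ_s, τ_x) be scalar GGAMP fixed-point stepsizes for (A, τ₀, v_w). Define γ := (1/(‖A‖_F² θ_s θ_x)) · (2/τ_x − θ_x/τ₀) · (2/τ_s − θ_s v_w). Then every complex eigenvalue of the GGAMP iteration matrix H has modulus strictly less than 1 if and only if ‖A‖₂² < ‖A‖_F² · γ. -/
open Matrix

/-- Squared Frobenius norm of a real matrix. -/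
noncomputable def frobSq {m n : ℕ} (A : Matrix (Fin m) (Fin n) ℝ) : ℝ :=
  ∑ i, ∑ j, (A i j) ^ 2

/-- Squared spectral (ℓ²-operator) norm of a real matrix. -/
noncomputable def specSq {m n : ℕ} (A : Matrix (Fin m) (Fin n) ℝ) : ℝ :=
  ‖LinearMap.toContinuousLinearMap (Matrix.toEuclideanLin A)‖ ^ 2

/-- The damping threshold `Γ(θ_s, θ_x)` of Theorem 2. -/
noncomputable def Gam (m n : ℕ) (θs θx : ℝ) : ℝ :=
  if n ≤ m then 2 * ((2 - θs) * m + θs * n) / (θs * θx * m * n)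
  else 2 * ((2 - θx) * n + θx * m) / (θs * θx * m * n)

/-- `(τs, τx)` are scalar GGAMP fixed-point stepsizes for `(A, τ0, vw)`. -/
noncomputable def IsFixedStepsizes {m n : ℕ} (A : Matrix (Fin m) (Fin n) ℝ)
    (τ0 vw τs τx : ℝ) : Prop :=
  0 < τs ∧ 0 < τx ∧
    1 / τs = (frobSq A / m) * τx + vw ∧
    1 / τx = (frobSq A / n) * τs + 1 / τ0

/-- The `(m+n)×(m+n)` GGAMP iteration matrix `H`. -/
noncomputable def iterMat {m n : ℕ} (A : Matrix (Fin m) (Fin n) ℝ)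
    (θs θx τs τx : ℝ) : Matrix (Fin m ⊕ Fin n) (Fin m ⊕ Fin n) ℝ :=
  let qs : ℝ := τs * (frobSq A / m) * τx
  let qx : ℝ := τx * (frobSq A / n) * τs
  let ds : ℝ := (1 - θs) + θs * qs
  let dx : ℝ := (1 - θx) + θx * qx
  let F : Matrix (Fin m) (Fin n) ℝ := Real.sqrt (θs * θx * τs * τx) • A
  Matrix.fromBlocks (ds • (1 : Matrix (Fin m) (Fin m) ℝ)) F
    (-(ds • Fᵀ)) (dx • (1 : Matrix (Fin n) (Fin n) ℝ) - Fᵀ * F)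

/-- `μ ∈ ℂ` is an eigenvalue of the real matrix `M`. -/
def HasEig {N : Type*} [Fintype N] (M : Matrix N N ℝ) (μ : ℂ) : Prop :=
  ∃ v : N → ℂ, v ≠ 0 ∧ (M.map (fun x => (x : ℂ))).mulVec v = μ • v

/-!
If `(u, w)` is an eigenvector of `H` for `μ`, then `F w = (μ - d_s) u` and `μ Fᵀ u = (d_x - μ) w`,
so `μ FᵀF w = (μ - d_s)(d_x - μ) w`. Either `w = 0` and `μ = d_s`, or pairing with `w` shows that
`μ` is a root of `z² - (d_s + d_x - λ) z + d_s d_x` for a Rayleigh quotient `λ ∈ [0, ‖F‖₂²]` of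
`FᵀF`. Conversely, for an eigenpair `(λ, v)` of `FᵀF` and a root `x ≠ d_s` of that quadratic,
`((x - d_s)⁻¹ F v, v)` is an eigenvector of `H` for `x`. Since `|d_s|, |d_x| < 1`, the Schur–Cohn
conditions put both roots in the open unit disc when `λ < (1 + d_s)(1 + d_x)`, and otherwise there
is a real root `≤ -1`; the top eigenvalue `λ = ‖F‖₂²` of `FᵀF` decides. At the fixed point
`1 + d_s = τ_s (2/τ_s - θ_s v_w)`, `1 + d_x = τ_x (2/τ_x - θ_x/τ₀)` and
`‖F‖₂² = θ_s θ_x τ_s τ_x ‖A‖₂²`, which turns `‖F‖₂² < (1 + d_s)(1 + d_x)` into `‖A‖₂² < ‖A‖_F² γ`.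
-/

open scoped Matrix.Norms.L2Operator ComplexOrder

theorem norm_lt_one_of_sq_sub_mul_add_eq_zero {t p : ℝ} (hp : p < 1) (ht : |t| < 1 + p)
    {z : ℂ} (hz : z ^ 2 - t * z + p = 0) : ‖z‖ < 1 := by
  obtain ⟨ht₁, ht₂⟩ := abs_lt.mp ht
  have hre := congrArg Complex.re hz
  have him := congrArg Complex.im hz
  simp only [pow_two, Complex.add_re, Complex.sub_re, Complex.mul_re, Complex.ofReal_re,
    Complex.ofReal_im, zero_mul, sub_zero, Complex.zero_re, Complex.add_im, Complex.sub_im,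
    Complex.mul_im, add_zero, Complex.zero_im] at hre him
  by_cases hb : z.im = 0
  · rw [hb] at hre
    rw [← Complex.re_add_im z, hb, Complex.ofReal_zero, zero_mul, add_zero, Complex.norm_real,
      Real.norm_eq_abs, abs_lt]
    constructor <;> nlinarith
  -- non-real roots are complex conjugates with product `p`
  · have ht : t = 2 * z.re := by
      have : z.im * (2 * z.re - t) = 0 := by linear_combination him
      linarith [(mul_eq_zero.mp this).resolve_left hb]
    have : ‖z‖ ^ 2 = p := by
      rw [Complex.sq_norm, Complex.normSq_apply]; subst ht; linear_combination -hre
    nlinarith [norm_nonneg z]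

theorem exists_le_neg_one_sq_sub_mul_add_eq_zero {t p : ℝ} (h : 1 + t + p ≤ 0) :
    ∃ x ≤ -1, x ^ 2 - t * x + p = 0 := by
  have hdisc : 0 ≤ t ^ 2 - 4 * p := by nlinarith [sq_nonneg (t + 2)]
  set s := √(t ^ 2 - 4 * p)
  have hs : s ^ 2 = t ^ 2 - 4 * p := Real.sq_sqrt hdisc
  refine ⟨(t - s) / 2, ?_, by linear_combination hs / 4⟩
  nlinarith [Real.sqrt_nonneg (t ^ 2 - 4 * p)]

theorem smul_sum_elim {α β M R : Type*} [SMul R M] (c : R) (u : α → M) (w : β → M) :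
    c • Sum.elim u w = Sum.elim (c • u) (c • w) := by
  ext (_ | _) <;> rfl

section GgampBlock

variable {K : Type*} [Field K] {ι κ : Type*} [Fintype ι] [DecidableEq ι] [DecidableEq κ]

def ggampBlock (d e : K) (F : Matrix ι κ K) : Matrix (ι ⊕ κ) (ι ⊕ κ) K :=
  fromBlocks (d • 1) F (-(d • Fᵀ)) (e • 1 - Fᵀ * F)

theorem ggampBlock_map {L : Type*} [Field L] (f : K →+* L) (d e : K) (F : Matrix ι κ K) :
    (ggampBlock d e F).map f = ggampBlock (f d) (f e) (F.map f) := by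
  ext (i | i) (j | j) <;> simp [ggampBlock, one_apply, mul_apply, apply_ite f]

variable [Fintype κ]

theorem ggampBlock_mulVec_sum_elim (d e : K) (F : Matrix ι κ K) (u : ι → K) (w : κ → K) :
    ggampBlock d e F *ᵥ Sum.elim u w =
      Sum.elim (d • u + F *ᵥ w) (e • w - d • (Fᵀ *ᵥ u) - Fᵀ *ᵥ (F *ᵥ w)) := by
  rw [ggampBlock, fromBlocks_mulVec, Sum.elim_comp_inl, Sum.elim_comp_inr, smul_mulVec,
    one_mulVec, neg_mulVec, smul_mulVec, sub_mulVec, smul_mulVec, one_mulVec, mulVec_mulVec]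
  congr 1
  abel

theorem eigen_relations_of_ggampBlock_mulVec_eq_smul {d e μ : K} {F : Matrix ι κ K}
    {u : ι → K} {w : κ → K} (h : ggampBlock d e F *ᵥ Sum.elim u w = μ • Sum.elim u w) :
    F *ᵥ w = (μ - d) • u ∧ μ • ((Fᵀ * F) *ᵥ w) = ((μ - d) * (e - μ)) • w := by
  rw [ggampBlock_mulVec_sum_elim, smul_sum_elim, Sum.elim_eq_iff] at h
  obtain ⟨h₁, h₂⟩ := h
  have hFw : F *ᵥ w = (μ - d) • u := by rw [sub_smul, ← h₁]; abel
  have hFu : μ • (Fᵀ *ᵥ u) = (e - μ) • w := by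
    rw [sub_smul, ← h₂, hFw, mulVec_smul]; module
  refine ⟨hFw, ?_⟩
  rw [← mulVec_mulVec, hFw, mulVec_smul, smul_comm, hFu, smul_smul]

theorem ggampBlock_mulVec_sum_elim_eq_smul {d e x l : K} {F : Matrix ι κ K} {v : κ → K}
    (hv : (Fᵀ * F) *ᵥ v = l • v) (hx : x ≠ d) (hroot : x ^ 2 - (d + e - l) * x + d * e = 0) :
    ggampBlock d e F *ᵥ Sum.elim ((x - d)⁻¹ • (F *ᵥ v)) v =
      x • Sum.elim ((x - d)⁻¹ • (F *ᵥ v)) v := by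
  have hxd : x - d ≠ 0 := sub_ne_zero.mpr hx
  rw [ggampBlock_mulVec_sum_elim, smul_sum_elim, mulVec_smul, mulVec_mulVec, hv]
  congr 1
  · match_scalars
    field_simp
    ring
  · have hl : e - d * (x - d)⁻¹ * l - l = x := by field_simp; linear_combination -hroot
    match_scalars
    linear_combination hl

end GgampBlock

theorem hasEig_of_mulVec_eq_smul {N : Type*} [Fintype N] {M : Matrix N N ℝ} {x : ℝ} {X : N → ℝ}
    (hX : X ≠ 0) (h : M *ᵥ X = x • X) : HasEig M x := by
  refine ⟨Complex.ofReal ∘ X, fun h0 => hX (funext fun i => by simpa using congrFun h0 i), ?_⟩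
  ext i
  simpa [mulVec, dotProduct] using congrArg Complex.ofReal (congrFun h i)

section ComplexVectors

variable {ι κ : Type*} [Fintype κ]

theorem star_dotProduct_self_eq (z : κ → ℂ) :
    star z ⬝ᵥ z = Complex.ofReal
      ((Complex.re ∘ z) ⬝ᵥ (Complex.re ∘ z) + (Complex.im ∘ z) ⬝ᵥ (Complex.im ∘ z)) := by
  simp only [dotProduct, ← Finset.sum_add_distrib, Complex.ofReal_sum, Pi.star_apply,
    Function.comp_apply]
  refine Finset.sum_congr rfl fun i _ => ?_
  rw [Complex.star_def, ← Complex.normSq_eq_conj_mul_self, Complex.normSq_apply]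

theorem re_comp_map_ofReal_mulVec (F : Matrix ι κ ℝ) (w : κ → ℂ) :
    Complex.re ∘ (F.map Complex.ofReal *ᵥ w) = F *ᵥ (Complex.re ∘ w) := by
  ext i; simp [mulVec, dotProduct, Complex.re_sum]

theorem im_comp_map_ofReal_mulVec (F : Matrix ι κ ℝ) (w : κ → ℂ) :
    Complex.im ∘ (F.map Complex.ofReal *ᵥ w) = F *ᵥ (Complex.im ∘ w) := by
  ext i; simp [mulVec, dotProduct, Complex.im_sum]

theorem star_dotProduct_map_transpose_mul_self_mulVec [Fintype ι] (F : Matrix ι κ ℝ) (w : κ → ℂ) :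
    star w ⬝ᵥ (((F.map Complex.ofReal)ᵀ * F.map Complex.ofReal) *ᵥ w) =
      star (F.map Complex.ofReal *ᵥ w) ⬝ᵥ (F.map Complex.ofReal *ᵥ w) := by
  have hB : (F.map Complex.ofReal)ᴴ = (F.map Complex.ofReal)ᵀ := by ext; simp
  rw [star_mulVec, hB, dotProduct_mulVec, dotProduct_mulVec, vecMul_vecMul]

end ComplexVectors

theorem EuclideanSpace.real_norm_sq_eq_dotProduct {ι : Type*} [Fintype ι]
    (x : EuclideanSpace ℝ ι) : ‖x‖ ^ 2 = x.ofLp ⬝ᵥ x.ofLp := by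
  rw [← real_inner_self_eq_norm_sq, EuclideanSpace.inner_eq_star_dotProduct, star_trivial]

section SpectralNorm

variable {m n : ℕ}

theorem specSq_eq_sq_l2_opNorm (F : Matrix (Fin m) (Fin n) ℝ) : specSq F = ‖F‖ ^ 2 := rfl

theorem specSq_smul (c : ℝ) (F : Matrix (Fin m) (Fin n) ℝ) :
    specSq (c • F) = c ^ 2 * specSq F := by
  rw [specSq_eq_sq_l2_opNorm, specSq_eq_sq_l2_opNorm, norm_smul, mul_pow, Real.norm_eq_abs, sq_abs]

theorem dotProduct_mulVec_self_le_specSq (F : Matrix (Fin m) (Fin n) ℝ) (x : Fin n → ℝ) :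
    (F *ᵥ x) ⬝ᵥ (F *ᵥ x) ≤ specSq F * (x ⬝ᵥ x) := by
  have h : ‖WithLp.toLp 2 (F *ᵥ x)‖ ≤ ‖F‖ * ‖WithLp.toLp 2 x‖ := F.l2_opNorm_mulVec _
  replace h := pow_le_pow_left₀ (norm_nonneg _) h 2
  rwa [mul_pow, ← specSq_eq_sq_l2_opNorm, EuclideanSpace.real_norm_sq_eq_dotProduct,
    EuclideanSpace.real_norm_sq_eq_dotProduct] at h

theorem specSq_le_of_forall_dotProduct_mulVec_self_le {F : Matrix (Fin m) (Fin n) ℝ} {l : ℝ}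
    (hl₀ : 0 ≤ l) (hl : ∀ x, (F *ᵥ x) ⬝ᵥ (F *ᵥ x) ≤ l * (x ⬝ᵥ x)) : specSq F ≤ l := by
  have hFl : ‖F‖ ≤ √l := by
    refine ContinuousLinearMap.opNorm_le_bound _ (Real.sqrt_nonneg l) fun x => ?_
    rw [← Real.sqrt_sq (norm_nonneg x), ← Real.sqrt_mul hl₀]
    apply Real.le_sqrt_of_sq_le
    rw [EuclideanSpace.real_norm_sq_eq_dotProduct, EuclideanSpace.real_norm_sq_eq_dotProduct]
    exact hl x.ofLp
  rw [specSq_eq_sq_l2_opNorm, ← Real.sq_sqrt hl₀]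
  gcongr

theorem inner_toEuclideanLin_transpose_mul_self (F : Matrix (Fin m) (Fin n) ℝ)
    (x : EuclideanSpace ℝ (Fin n)) :
    inner ℝ (toEuclideanLin (Fᵀ * F) x) x = (F *ᵥ x.ofLp) ⬝ᵥ (F *ᵥ x.ofLp) := by
  change inner ℝ (WithLp.toLp 2 ((Fᵀ * F) *ᵥ x.ofLp)) (WithLp.toLp 2 x.ofLp) = _
  rw [EuclideanSpace.inner_toLp_toLp, star_trivial, ← mulVec_mulVec, dotProduct_mulVec,
    vecMul_transpose]

theorem exists_eigenvalue_transpose_mul_self_ge_specSq (hn : 0 < n)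
    (F : Matrix (Fin m) (Fin n) ℝ) :
    ∃ l, specSq F ≤ l ∧ ∃ v ≠ 0, (Fᵀ * F) *ᵥ v = l • v := by
  have : Nonempty (Fin n) := ⟨⟨0, hn⟩⟩
  have hT : (toEuclideanLin (Fᵀ * F)).IsSymmetric :=
    isSymmetric_toEuclideanLin_iff.mpr (by simpa using isHermitian_conjTranspose_mul_self F)
  obtain ⟨v, hv, hv₀⟩ := hT.hasEigenvalue_iSup_of_finiteDimensional.exists_hasEigenvector
  simp only [RCLike.re_to_real, inner_toEuclideanLin_transpose_mul_self,
    EuclideanSpace.real_norm_sq_eq_dotProduct] at hv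
  refine ⟨_, specSq_le_of_forall_dotProduct_mulVec_self_le ?_ fun x => ?_, v.ofLp,
    by simpa using hv₀, congrArg WithLp.ofLp (Module.End.mem_eigenspace_iff.mp hv)⟩
  · exact Real.iSup_nonneg fun _ => div_nonneg (dotProduct_self_star_nonneg _)
      (dotProduct_self_star_nonneg _)
  · rcases eq_or_ne x 0 with rfl | hx
    · simp
    have hbdd : BddAbove (Set.range fun y : { y : EuclideanSpace ℝ (Fin n) // y ≠ 0 } =>
        (F *ᵥ y.1.ofLp) ⬝ᵥ (F *ᵥ y.1.ofLp) / (y.1.ofLp ⬝ᵥ y.1.ofLp)) :=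
      ⟨specSq F, Set.forall_mem_range.mpr fun y => div_le_of_le_mul₀
        (dotProduct_self_star_nonneg _) (sq_nonneg _) (dotProduct_mulVec_self_le_specSq F _)⟩
    have hx₀ : 0 < x ⬝ᵥ x :=
      (dotProduct_self_star_nonneg x).lt_of_ne' (dotProduct_self_eq_zero.not.mpr hx)
    rw [← div_le_iff₀ hx₀]
    exact le_ciSup hbdd ⟨WithLp.toLp 2 x, by simpa using hx⟩

theorem exists_rayleigh_quotient_mem_Icc (F : Matrix (Fin m) (Fin n) ℝ) (w : Fin n → ℂ) :
    ∃ l ∈ Set.Icc 0 (specSq F),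
      star w ⬝ᵥ (((F.map Complex.ofReal)ᵀ * F.map Complex.ofReal) *ᵥ w) =
        l * (star w ⬝ᵥ w) := by
  rw [star_dotProduct_map_transpose_mul_self_mulVec, star_dotProduct_self_eq,
    star_dotProduct_self_eq, re_comp_map_ofReal_mulVec, im_comp_map_ofReal_mulVec]
  set a := (Complex.re ∘ w) ⬝ᵥ (Complex.re ∘ w) + (Complex.im ∘ w) ⬝ᵥ (Complex.im ∘ w)
  set b := (F *ᵥ (Complex.re ∘ w)) ⬝ᵥ (F *ᵥ (Complex.re ∘ w)) +
    (F *ᵥ (Complex.im ∘ w)) ⬝ᵥ (F *ᵥ (Complex.im ∘ w))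
  have hb : b ≤ specSq F * a := by
    rw [mul_add]
    exact add_le_add (dotProduct_mulVec_self_le_specSq F _) (dotProduct_mulVec_self_le_specSq F _)
  have ha : 0 ≤ a := add_nonneg (dotProduct_self_star_nonneg _) (dotProduct_self_star_nonneg _)
  have hb₀ : 0 ≤ b := add_nonneg (dotProduct_self_star_nonneg _) (dotProduct_self_star_nonneg _)
  rcases ha.eq_or_lt with ha | ha
  · have hb0 : b = 0 := le_antisymm (by simpa [← ha] using hb) hb₀
    exact ⟨0, ⟨le_rfl, sq_nonneg _⟩, by simp [hb0]⟩
  · refine ⟨b / a, ⟨by positivity, (div_le_iff₀ ha).mpr hb⟩, ?_⟩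
    rw [Complex.ofReal_div, div_mul_cancel₀ _ (by exact_mod_cast ha.ne')]

end SpectralNorm

section Stability

variable {m n : ℕ} {d e : ℝ} {F : Matrix (Fin m) (Fin n) ℝ}

theorem norm_lt_one_of_hasEig_ggampBlock (hd : |d| < 1) (he : |e| < 1)
    (hF : specSq F < (1 + d) * (1 + e)) {μ : ℂ} (hμ : HasEig (ggampBlock d e F) μ) : ‖μ‖ < 1 := by
  obtain ⟨v, hv₀, hv⟩ := hμ
  have hmap : (ggampBlock d e F).map (fun x : ℝ => (x : ℂ)) =
      ggampBlock (d : ℂ) e (F.map Complex.ofReal) := ggampBlock_map Complex.ofRealHom d e F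
  rw [hmap, ← Sum.elim_comp_inl_inr v] at hv
  obtain ⟨hFw, hw⟩ := eigen_relations_of_ggampBlock_mulVec_eq_smul hv
  rcases eq_or_ne (v ∘ Sum.inr) 0 with hw₀ | hw₀
  · have hu₀ : v ∘ Sum.inl ≠ 0 := fun hu₀ =>
      hv₀ (by rw [← Sum.elim_comp_inl_inr v, hu₀, hw₀]; ext (_ | _) <;> rfl)
    rw [hw₀, mulVec_zero, eq_comm, smul_eq_zero] at hFw
    rw [sub_eq_zero.mp (hFw.resolve_right hu₀), Complex.norm_real, Real.norm_eq_abs]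
    exact hd
  obtain ⟨l, ⟨hl₀, hlF⟩, hl⟩ := exists_rayleigh_quotient_mem_Icc F (v ∘ Sum.inr)
  have hww : star (v ∘ Sum.inr) ⬝ᵥ (v ∘ Sum.inr) ≠ 0 := dotProduct_star_self_eq_zero.not.mpr hw₀
  have hquad := congrArg (star (v ∘ Sum.inr) ⬝ᵥ ·) hw
  simp only [dotProduct_smul, smul_eq_mul, hl] at hquad
  have hroot : μ ^ 2 - ((d + e - l : ℝ) : ℂ) * μ + ((d * e : ℝ) : ℂ) = 0 := by
    apply mul_right_cancel₀ hww
    push_cast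
    linear_combination hquad
  obtain ⟨hd₁, hd₂⟩ := abs_lt.mp hd
  obtain ⟨he₁, he₂⟩ := abs_lt.mp he
  refine norm_lt_one_of_sq_sub_mul_add_eq_zero (by nlinarith) (abs_lt.mpr ⟨by linarith, ?_⟩) hroot
  nlinarith

theorem exists_hasEig_ggampBlock_one_le_norm (hn : 0 < n) (hd : |d| < 1)
    (hF : (1 + d) * (1 + e) ≤ specSq F) : ∃ μ : ℂ, HasEig (ggampBlock d e F) μ ∧ 1 ≤ ‖μ‖ := by
  obtain ⟨l, hFl, v, hv₀, hv⟩ := exists_eigenvalue_transpose_mul_self_ge_specSq hn F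
  obtain ⟨x, hx, hroot⟩ :=
    exists_le_neg_one_sq_sub_mul_add_eq_zero (t := d + e - l) (p := d * e) (by linarith)
  have hxd : x ≠ d := by linarith [(abs_lt.mp hd).1]
  refine ⟨x, hasEig_of_mulVec_eq_smul ?_ (ggampBlock_mulVec_sum_elim_eq_smul hv hxd hroot), ?_⟩
  · exact fun h => hv₀ (funext fun j => congrFun h (Sum.inr j))
  · rw [Complex.norm_real, Real.norm_eq_abs]
    exact le_abs.mpr (Or.inr (by linarith))

theorem forall_hasEig_ggampBlock_norm_lt_one_iff (hn : 0 < n) (hd : |d| < 1) (he : |e| < 1) :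
    (∀ μ : ℂ, HasEig (ggampBlock d e F) μ → ‖μ‖ < 1) ↔ specSq F < (1 + d) * (1 + e) := by
  refine ⟨fun h => ?_, fun hF μ => norm_lt_one_of_hasEig_ggampBlock hd he hF⟩
  by_contra! hF
  obtain ⟨μ, hμ, hμ₁⟩ := exists_hasEig_ggampBlock_one_le_norm hn hd hF
  exact (h μ hμ).not_ge hμ₁

end Stability

theorem iterMat_eq_ggampBlock {m n : ℕ} (A : Matrix (Fin m) (Fin n) ℝ) (θs θx τs τx : ℝ) :
    iterMat A θs θx τs τx =
      ggampBlock ((1 - θs) + θs * (τs * (frobSq A / m) * τx))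
        ((1 - θx) + θx * (τx * (frobSq A / n) * τs)) (√(θs * θx * τs * τx) • A) :=
  rfl

theorem frobSq_pos {m n : ℕ} {A : Matrix (Fin m) (Fin n) ℝ} {i : Fin m} {j : Fin n}
    (hij : A i j ≠ 0) : 0 < frobSq A :=
  Finset.sum_pos' (fun _ _ => Finset.sum_nonneg fun _ _ => sq_nonneg _)
    ⟨i, Finset.mem_univ _, Finset.sum_pos' (fun _ _ => sq_nonneg _)
      ⟨j, Finset.mem_univ _, by positivity⟩⟩

theorem abs_one_sub_add_mul_lt_one {θ q : ℝ} (hθ : θ ∈ Set.Ioc 0 1) (hq₀ : 0 < q) (hq₁ : q < 1) :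
    |(1 - θ) + θ * q| < 1 := by
  obtain ⟨hθ₀, hθ₁⟩ := hθ
  exact abs_lt.mpr ⟨by nlinarith, by nlinarith⟩

theorem IsFixedStepsizes.mul_frobSq_div_mul_eq {m n : ℕ} {A : Matrix (Fin m) (Fin n) ℝ}
    {τ0 vw τs τx : ℝ} (hfix : IsFixedStepsizes A τ0 vw τs τx) :
    τs * (frobSq A / m) * τx = 1 - τs * vw ∧ τx * (frobSq A / n) * τs = 1 - τx / τ0 := by
  obtain ⟨hτs, hτx, hfs, hfx⟩ := hfix
  field_simp at hfs hfx ⊢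
  exact ⟨by linear_combination -hfs, by linear_combination -hfx⟩

/-- **Lemma 5 (stability characterization, Appendix C).** At fixed-point
stepsizes, all eigenvalues of the GGAMP iteration matrix `H` lie strictly
inside the unit circle if and only if `‖A‖₂² < ‖A‖_F² · γ`, where
`γ = (1/(‖A‖_F² θ_s θ_x)) (2/τ_x − θ_x/τ₀)(2/τ_s − θ_s v_w)`. -/
theorem ggamp_scalar_stability_characterization {m n : ℕ}
    (A : Matrix (Fin m) (Fin n) ℝ) (hA : A ≠ 0)
    (θs θx : ℝ) (hθs : θs ∈ Set.Ioc (0 : ℝ) 1) (hθx : θx ∈ Set.Ioc (0 : ℝ) 1)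
    (τ0 vw : ℝ) (hτ0 : 0 < τ0) (hvw : 0 < vw)
    (τs τx : ℝ) (hfix : IsFixedStepsizes A τ0 vw τs τx) :
    (∀ μ : ℂ, HasEig (iterMat A θs θx τs τx) μ → ‖μ‖ < 1) ↔
      specSq A < frobSq A *
        (1 / (frobSq A * θs * θx) * (2 / τx - θx / τ0) * (2 / τs - θs * vw)) := by
  obtain ⟨hqs, hqx⟩ := hfix.mul_frobSq_div_mul_eq
  obtain ⟨hτs, hτx, -⟩ := hfix
  obtain ⟨i, j, hij⟩ : ∃ i j, A i j ≠ 0 := by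
    by_contra! h
    exact hA (Matrix.ext h)
  have hA₂ := frobSq_pos hij
  have hm : (0 : ℝ) < m := Nat.cast_pos.mpr i.pos
  have hn : (0 : ℝ) < n := Nat.cast_pos.mpr j.pos
  have hs : |(1 - θs) + θs * (τs * (frobSq A / m) * τx)| < 1 :=
    abs_one_sub_add_mul_lt_one hθs (by positivity) (by rw [hqs]; linarith [mul_pos hτs hvw])
  have hx : |(1 - θx) + θx * (τx * (frobSq A / n) * τs)| < 1 :=
    abs_one_sub_add_mul_lt_one hθx (by positivity) (by rw [hqx]; linarith [div_pos hτx hτ0])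
  have hθτ : 0 < θs * θx * τs * τx := by
    have := hθs.1
    have := hθx.1
    positivity
  have hγ : frobSq A * (1 / (frobSq A * θs * θx) * (2 / τx - θx / τ0) * (2 / τs - θs * vw)) =
      (1 + ((1 - θs) + θs * (1 - τs * vw))) * (1 + ((1 - θx) + θx * (1 - τx / τ0))) /
        (θs * θx * τs * τx) := by
    field_simp
    ring
  rw [iterMat_eq_ggampBlock, forall_hasEig_ggampBlock_norm_lt_one_iff j.pos hs hx, specSq_smul,
    Real.sq_sqrt hθτ.le, hqs, hqx, hγ, lt_div_iff₀ hθτ, mul_comm]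
end

section
/- Let F be a complex m×n matrix with operator norm ‖F‖₂ < 1, and let D_s ∈ ℂ^{m×m} and D_x ∈ ℂ^{n×n} be real diagonal matrices whose diagonal entries all lie in the interval [0,1). Then every complex eigenvalue of the (m+n)×(m+n) block matrix H := [[D_s, F],[−F*D_s, D_x − F*F]] has modulus strictly less than 1 (here F* denotes the conjugate transpose). -/
/-!
Test the eigenvector equation of `H` blockwise against `u` and `w`. With `P = ‖u‖²`,
`Q = ‖w‖²`, `A = u*D_s u ∈ [0, P]`, `B = w*D_x w ∈ [0, Q]` and `c = u*F w`, one gets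
`A + c = μP` and `B = μ(Q + c̄)`, hence `B = μ(Q - A) + |μ|²P`. If `|μ| ≥ 1`, either `μ` is
not real, so `Q = A` and `B = |μ|²P ≥ P`, or `μ = t` is real: `t ≥ 1` gives `B ≥ Q`, and
`t ≤ -1` makes `c` real with `c² ≥ PQ`, contradicting `|c| ≤ ‖F‖₂ ‖u‖ ‖w‖`. Since the
damping entries are `< 1`, each case collapses to `u = w = 0`.
-/

open Matrix

/-- Spectral (ℓ²-operator) norm of a complex matrix. -/
noncomputable def specNormC {m n : ℕ} (A : Matrix (Fin m) (Fin n) ℂ) : ℝ :=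
  ‖LinearMap.toContinuousLinearMap (Matrix.toEuclideanLin A)‖

open ComplexConjugate

theorem eigen_equations_of_fromBlocks_mulVec_eq_smul {R : Type*} [CommRing R] {m n : Type*}
    [Fintype m] [Fintype n] {D : Matrix m m R} {E : Matrix n n R} {F : Matrix m n R}
    {G : Matrix n m R} {u : m → R} {w : n → R} {μ : R}
    (h : fromBlocks D F (-(G * D)) (E - G * F) *ᵥ Sum.elim u w = μ • Sum.elim u w) :
    D *ᵥ u + F *ᵥ w = μ • u ∧ E *ᵥ w = μ • (w + G *ᵥ u) := by
  rw [fromBlocks_mulVec, Sum.elim_comp_inl, Sum.elim_comp_inr] at h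
  have h₁ : D *ᵥ u + F *ᵥ w = μ • u := funext fun i => congrFun h (Sum.inl i)
  have h₂ : -(G * D) *ᵥ u + (E - G * F) *ᵥ w = μ • w := funext fun j => congrFun h (Sum.inr j)
  refine ⟨h₁, ?_⟩
  have hsplit : -(G * D) *ᵥ u + (E - G * F) *ᵥ w = E *ᵥ w - G *ᵥ (D *ᵥ u + F *ᵥ w) := by
    rw [neg_mulVec, sub_mulVec, ← mulVec_mulVec, ← mulVec_mulVec, mulVec_add]
    abel
  rw [hsplit, h₁, mulVec_smul, sub_eq_iff_eq_add] at h₂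
  rw [h₂, smul_add]

theorem star_dotProduct_diagonal_ofReal_mulVec {ι : Type*} [Fintype ι] [DecidableEq ι]
    (d : ι → ℝ) (u : ι → ℂ) :
    star u ⬝ᵥ (diagonal (fun i => (d i : ℂ)) *ᵥ u) = ((∑ i, d i * ‖u i‖ ^ 2 : ℝ) : ℂ) := by
  simp [dotProduct, mulVec_diagonal, Complex.conj_mul', mul_left_comm]

theorem star_dotProduct_self_eq_ofReal {ι : Type*} [Fintype ι] (u : ι → ℂ) :
    star u ⬝ᵥ u = ((∑ i, ‖u i‖ ^ 2 : ℝ) : ℂ) := by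
  simp [dotProduct, Complex.conj_mul']

theorem star_dotProduct_conjTranspose_mulVec {R : Type*} [CommSemiring R] [StarRing R]
    {m n : Type*} [Fintype m] [Fintype n] (F : Matrix m n R) (u : m → R) (w : n → R) :
    star w ⬝ᵥ (Fᴴ *ᵥ u) = star (star u ⬝ᵥ (F *ᵥ w)) := by
  rw [star_dotProduct, star_mulVec, conjTranspose_conjTranspose, dotProduct_mulVec]

theorem norm_star_dotProduct_mulVec_sq_le {m n : ℕ} (F : Matrix (Fin m) (Fin n) ℂ)
    (u : Fin m → ℂ) (w : Fin n → ℂ) :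
    ‖star u ⬝ᵥ (F *ᵥ w)‖ ^ 2 ≤ specNormC F ^ 2 * (∑ i, ‖u i‖ ^ 2) * ∑ j, ‖w j‖ ^ 2 := by
  have hinner : star u ⬝ᵥ (F *ᵥ w) =
      inner ℂ (WithLp.toLp 2 u) (toEuclideanLin F (WithLp.toLp 2 w)) :=
    dotProduct_comm _ _
  have hle : ‖star u ⬝ᵥ (F *ᵥ w)‖ ≤
      ‖WithLp.toLp 2 u‖ * (specNormC F * ‖WithLp.toLp 2 w‖) := by
    rw [hinner]
    exact (norm_inner_le_norm _ _).trans (mul_le_mul_of_nonneg_left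
      ((toEuclideanLin F).toContinuousLinearMap.le_opNorm _) (norm_nonneg _))
  calc ‖star u ⬝ᵥ (F *ᵥ w)‖ ^ 2
      ≤ (‖WithLp.toLp 2 u‖ * (specNormC F * ‖WithLp.toLp 2 w‖)) ^ 2 := by gcongr
    _ = specNormC F ^ 2 * (∑ i, ‖u i‖ ^ 2) * ∑ j, ‖w j‖ ^ 2 := by
      simp only [mul_pow, EuclideanSpace.norm_sq_eq]
      ring

section WeightedSums

variable {ι E : Type*} [Fintype ι] [NormedAddCommGroup E]

theorem sum_norm_sq_pos {u : ι → E} (hu : u ≠ 0) : 0 < ∑ i, ‖u i‖ ^ 2 := by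
  obtain ⟨i, hi⟩ := Function.ne_iff.1 hu
  exact Finset.sum_pos' (fun _ _ => by positivity)
    ⟨i, Finset.mem_univ i, pow_pos (norm_pos_iff.2 hi) 2⟩

theorem sum_mul_norm_sq_nonneg {d : ι → ℝ} (hd : ∀ i, 0 ≤ d i) (u : ι → E) :
    0 ≤ ∑ i, d i * ‖u i‖ ^ 2 :=
  Finset.sum_nonneg fun i _ => mul_nonneg (hd i) (by positivity)

theorem sum_mul_norm_sq_le {d : ι → ℝ} (hd : ∀ i, d i ≤ 1) (u : ι → E) :
    ∑ i, d i * ‖u i‖ ^ 2 ≤ ∑ i, ‖u i‖ ^ 2 :=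
  Finset.sum_le_sum fun i _ => mul_le_of_le_one_left (by positivity) (hd i)

theorem sum_mul_norm_sq_lt {d : ι → ℝ} (hd : ∀ i, d i < 1) {u : ι → E}
    (hu : 0 < ∑ i, ‖u i‖ ^ 2) : ∑ i, d i * ‖u i‖ ^ 2 < ∑ i, ‖u i‖ ^ 2 := by
  obtain ⟨i, -, hi⟩ := Finset.exists_lt_of_sum_lt (f := fun _ => (0 : ℝ)) (by simpa using hu)
  exact Finset.sum_lt_sum (fun j _ => mul_le_of_le_one_left (by positivity) (hd j).le)
    ⟨i, Finset.mem_univ i, mul_lt_of_lt_one_left hi (hd i)⟩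

end WeightedSums

/-- For an eigenpair `(μ, (u, w))` of `H`: `P = ‖u‖²`, `Q = ‖w‖²`, `A = u*D_s u`, `B = w*D_x w`,
`c = u*F w`, `f = ‖F‖₂²`. -/
theorem norm_lt_one_of_moment_relations {P Q A B f : ℝ} {μ c : ℂ}
    (hA₀ : 0 ≤ A) (hAP : A ≤ P) (hAP' : 0 < P → A < P)
    (hB₀ : 0 ≤ B) (hBQ : B ≤ Q) (hBQ' : 0 < Q → B < Q)
    (hPQ : 0 < P + Q) (hf : f < 1) (hc : ‖c‖ ^ 2 ≤ f * P * Q)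
    (h₁ : A + c = μ * P) (h₂ : B = μ * (Q + conj c)) : ‖μ‖ < 1 := by
  by_contra! hμ
  have hP₀ : 0 ≤ P := hA₀.trans hAP
  have hQ₀ : 0 ≤ Q := hB₀.trans hBQ
  have hB : (B : ℂ) = μ * (Q - A) + Complex.normSq μ * P := by
    have hconj : conj c = conj μ * P - A := by
      simpa [eq_sub_iff_add_eq, add_comm] using congrArg conj h₁
    rw [h₂, hconj, Complex.normSq_eq_conj_mul_self]
    ring
  have him : μ.im * (Q - A) = 0 := by simpa using congrArg Complex.im hB
  have hre : B = μ.re * (Q - A) + Complex.normSq μ * P := by simpa using congrArg Complex.re hB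
  rcases mul_eq_zero.1 him with hreal | hQA
  · obtain ⟨t, rfl⟩ : ∃ t : ℝ, μ = t := ⟨μ.re, Complex.ext rfl hreal⟩
    simp only [Complex.ofReal_re, Complex.normSq_ofReal] at hre
    rw [Complex.norm_real, Real.norm_eq_abs] at hμ
    have hct : c = ((t * P - A : ℝ) : ℂ) := by push_cast; linear_combination h₁
    rw [hct, Complex.norm_real, Real.norm_eq_abs, sq_abs] at hc
    rcases le_abs'.1 hμ with ht | ht
    · -- `A - tP` dominates both `P` and `Q`, so `PQ ≤ c² ≤ f PQ` forces `P = Q = 0`.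
      have hQ : Q ≤ A - t * P := by nlinarith
      have hP : P ≤ A - t * P := by nlinarith
      have hPQc : P * Q ≤ f * P * Q := hc.trans' (by nlinarith)
      have hPQ0 : P * Q = 0 := by nlinarith [mul_nonneg hP₀ hQ₀]
      nlinarith
    · have hgap : t * (P - A) ≤ B - Q := by
        have : 0 ≤ (t - 1) * Q + t * (t - 1) * P := by
          have := sub_nonneg.2 ht
          positivity
        rw [hre]
        linarith
      have hQ : ¬0 < Q := fun hQ => by
        linarith [hBQ' hQ, mul_nonneg (by linarith : 0 ≤ t) (sub_nonneg.2 hAP)]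
      have hP : ¬0 < P := fun hP => by
        linarith [mul_pos (by linarith : 0 < t) (sub_pos.2 (hAP' hP))]
      linarith
  · rw [hQA, mul_zero, zero_add] at hre
    have hPB : P ≤ B := hre ▸ le_mul_of_one_le_left hP₀ (by rw [← Complex.sq_norm]; nlinarith)
    have hP : ¬0 < P := fun hP => by linarith [hAP' hP, sub_eq_zero.1 hQA]
    have hQ : ¬0 < Q := fun hQ => by linarith [hBQ' hQ, sub_eq_zero.1 hQA]
    linarith

/-- **Theorem 3 (local stability of damped GAMP).** If `‖F‖₂ < 1` and `D_s, D_x`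
are real diagonal matrices with diagonal entries in `[0,1)`, then every
eigenvalue of the block matrix `H = [[D_s, F], [−F*D_s, D_x − F*F]]` has
modulus strictly less than 1. -/
theorem damped_gamp_local_stability {m n : ℕ}
    (F : Matrix (Fin m) (Fin n) ℂ) (hF : specNormC F < 1)
    (ds : Fin m → ℝ) (hds : ∀ i, ds i ∈ Set.Ico (0 : ℝ) 1)
    (dx : Fin n → ℝ) (hdx : ∀ j, dx j ∈ Set.Ico (0 : ℝ) 1) :
    ∀ (μ : ℂ) (v : (Fin m ⊕ Fin n) → ℂ), v ≠ 0 →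
      (Matrix.fromBlocks
          (Matrix.diagonal (fun i => (ds i : ℂ))) F
          (-(Fᴴ * Matrix.diagonal (fun i => (ds i : ℂ))))
          (Matrix.diagonal (fun j => (dx j : ℂ)) - Fᴴ * F)).mulVec v = μ • v →
      ‖μ‖ < 1 := by
  intro μ v hv hHv
  obtain ⟨u, w, rfl⟩ : ∃ u w, v = Sum.elim u w := ⟨_, _, (Sum.elim_comp_inl_inr v).symm⟩
  obtain ⟨hu, hw⟩ := eigen_equations_of_fromBlocks_mulVec_eq_smul hHv
  refine norm_lt_one_of_moment_relations
    (sum_mul_norm_sq_nonneg (fun i => (hds i).1) u) (sum_mul_norm_sq_le (fun i => (hds i).2.le) u)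
    (sum_mul_norm_sq_lt (fun i => (hds i).2))
    (sum_mul_norm_sq_nonneg (fun j => (hdx j).1) w) (sum_mul_norm_sq_le (fun j => (hdx j).2.le) w)
    (sum_mul_norm_sq_lt (fun j => (hdx j).2))
    (by simpa [Fintype.sum_sum_type] using sum_norm_sq_pos hv)
    (pow_lt_one₀ (norm_nonneg _) hF two_ne_zero) (norm_star_dotProduct_mulVec_sq_le F u w) ?_ ?_
  · simpa only [dotProduct_add, dotProduct_smul, smul_eq_mul,
      star_dotProduct_diagonal_ofReal_mulVec, star_dotProduct_self_eq_ofReal]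
      using congrArg (star u ⬝ᵥ ·) hu
  · simpa only [dotProduct_add, dotProduct_smul, smul_eq_mul, star_dotProduct_conjTranspose_mulVec,
      star_dotProduct_diagonal_ofReal_mulVec, star_dotProduct_self_eq_ofReal, Complex.star_def]
      using congrArg (star w ⬝ᵥ ·) hw
end

section
/- Let A be a real m×n matrix, S := |A|² its entrywise square, τ̄_p ∈ ℝ^m and τ_r ∈ ℝ^n with strictly positive entries, and q_s ∈ (0,1)^m, q_x ∈ (0,1)^n satisfying 1/τ̄_{p,i} = Σ_j S_{ij} q_{x,j} τ_{r,j} and 1/τ_{r,j} = Σ_i S_{ij} q_{s,i} τ̄_{p,i}. Let Ã := diag(τ̄_p q_s)^{1/2}·A·diag(τ_r q_x)^{1/2}, and set q̄_s := (1/m)Σ_i q_{s,i}, q̄_x := (1/n)Σ_j q_{x,j}. Then ‖Ã‖_F² = m·q̄_s = n·q̄_x ≤ min{m,n}·max{q̄_s, q̄_x}, hence κ(Ã) ≥ ‖Ã‖₂²/max{q̄_s, q̄_x}; consequently, for any θ_s, θ_x ∈ (0,1], the condition κ(Ã) < 1/(θ_x θ_s max{q̄_s, q̄_x}) implies θ_s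 θ_x ‖Ã‖₂² < 1. -/
open Matrix

/-- The row-column normalized matrix `Ã = diag(τ̄_p q_s)^{1/2} A diag(τ_r q_x)^{1/2}`. -/
noncomputable def rcNormalized {m n : ℕ} (A : Matrix (Fin m) (Fin n) ℝ)
    (τp qs : Fin m → ℝ) (τr qx : Fin n → ℝ) : Matrix (Fin m) (Fin n) ℝ :=
  fun i j => Real.sqrt (τp i * qs i) * A i j * Real.sqrt (τr j * qx j)

/-- Peak-to-average ratio of the squared singular values. -/
noncomputable def kappa {m n : ℕ} (A : Matrix (Fin m) (Fin n) ℝ) : ℝ :=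
  specSq A / (frobSq A / (min m n : ℝ))

/-! At the fixed point, row `i` of `Ã` has squared norm `τ̄_{p,i} q_{s,i} · (1/τ̄_{p,i}) = q_{s,i}`
and column `j` has squared norm `q_{x,j}`, so `‖Ã‖_F² = ∑ q_s = ∑ q_x`. Hence
`‖Ã‖_F² / min{m,n} ≤ max{q̄_s, q̄_x}`, and any such upper bound `M` on the average squared singular
value gives `‖Ã‖₂² / M ≤ κ(Ã)`; the condition on `κ` then bounds `‖Ã‖₂²` by `1/(θ_s θ_x)`. -/

lemma natCast_mul_one_div_mul_sum {m : ℕ} (f : Fin m → ℝ) :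
    (m : ℝ) * (1 / m * ∑ i, f i) = ∑ i, f i := by
  rcases Nat.eq_zero_or_pos m with rfl | hm
  · simp
  · field_simp

lemma le_min_mul_max_of_eq_mul {F a b x y : ℝ} (ha : 0 ≤ a) (hb : 0 ≤ b)
    (hx : F = a * x) (hy : F = b * y) : F ≤ min a b * max x y := by
  rcases le_total a b with hab | hba
  · rw [min_eq_left hab, hx]
    exact mul_le_mul_of_nonneg_left (le_max_left x y) ha
  · rw [min_eq_right hba, hy]
    exact mul_le_mul_of_nonneg_left (le_max_right x y) hb

section Kappa

variable {m n : ℕ} (A : Matrix (Fin m) (Fin n) ℝ)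

lemma frobSq_transpose : frobSq Aᵀ = frobSq A :=
  Finset.sum_comm

lemma frobSq_eq_zero_iff : frobSq A = 0 ↔ A = 0 := by
  simp only [frobSq, Finset.sum_eq_zero_iff_of_nonneg (fun i _ => Finset.sum_nonneg
      fun j _ => sq_nonneg (A i j)), Finset.sum_eq_zero_iff_of_nonneg (fun _ _ => sq_nonneg _),
    Finset.mem_univ, true_implies, pow_eq_zero_iff two_ne_zero]
  exact ⟨fun h => Matrix.ext h, fun h i j => by simp [h]⟩

lemma specSq_eq_zero_or_frobSq_div_min_pos :
    specSq A = 0 ∨ 0 < frobSq A / (min m n : ℝ) := by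
  have hfrob : 0 ≤ frobSq A :=
    Finset.sum_nonneg fun i _ => Finset.sum_nonneg fun j _ => sq_nonneg (A i j)
  rcases (div_nonneg hfrob (Nat.cast_nonneg (min m n))).eq_or_lt with h | h
  · left
    suffices hA : A = 0 by simp [specSq, hA]
    rcases div_eq_zero_iff.mp h.symm with hF | hmin
    · exact (frobSq_eq_zero_iff A).mp hF
    · rcases Nat.min_eq_zero_iff.mp (by exact_mod_cast hmin) with rfl | rfl
      · exact Matrix.ext fun i => i.elim0
      · exact Matrix.ext fun _ j => j.elim0
  · exact .inr (by exact_mod_cast h)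

variable {A}

lemma specSq_div_le_kappa {M : ℝ} (hM : frobSq A / (min m n : ℝ) ≤ M) :
    specSq A / M ≤ kappa A := by
  rcases specSq_eq_zero_or_frobSq_div_min_pos A with h | h
  · simp [kappa, h]
  · exact div_le_div_of_nonneg_left (sq_nonneg _) h hM

lemma mul_specSq_lt_one_of_kappa_lt {θ M : ℝ} (hθ : 0 < θ)
    (hM : frobSq A / (min m n : ℝ) ≤ M) (hκ : kappa A < 1 / (θ * M)) :
    θ * specSq A < 1 := by
  rcases specSq_eq_zero_or_frobSq_div_min_pos A with h | h
  · simp [h]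
  · have hMpos : 0 < M := h.trans_le hM
    have hS : specSq A / M < 1 / (θ * M) := (specSq_div_le_kappa hM).trans_lt hκ
    rw [div_lt_div_iff₀ hMpos (by positivity)] at hS
    nlinarith

end Kappa

section RCNormalized

variable {m n : ℕ} (A : Matrix (Fin m) (Fin n) ℝ) (τp qs : Fin m → ℝ) (τr qx : Fin n → ℝ)

lemma rcNormalized_transpose : (rcNormalized A τp qs τr qx)ᵀ = rcNormalized Aᵀ τr qx τp qs := by
  ext j i
  simp only [transpose_apply, rcNormalized]
  ring

variable {A τp qs τr qx}

lemma sq_rcNormalized_apply {i : Fin m} {j : Fin n} (hi : 0 ≤ τp i * qs i)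
    (hj : 0 ≤ τr j * qx j) :
    rcNormalized A τp qs τr qx i j ^ 2 = τp i * qs i * (A i j ^ 2 * (qx j * τr j)) := by
  simp only [rcNormalized, mul_pow, Real.sq_sqrt hi, Real.sq_sqrt hj]
  ring

lemma frobSq_rcNormalized_eq_sum_left (hs : ∀ i, 0 ≤ τp i * qs i) (hx : ∀ j, 0 ≤ τr j * qx j)
    (hτp : ∀ i, τp i ≠ 0) (hfixp : ∀ i, 1 / τp i = ∑ j, A i j ^ 2 * (qx j * τr j)) :
    frobSq (rcNormalized A τp qs τr qx) = ∑ i, qs i := by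
  refine Finset.sum_congr rfl fun i _ => ?_
  simp only [sq_rcNormalized_apply (hs i) (hx _), ← Finset.mul_sum, ← hfixp i]
  field_simp [hτp i]

lemma frobSq_rcNormalized_eq_sum_right (hs : ∀ i, 0 ≤ τp i * qs i) (hx : ∀ j, 0 ≤ τr j * qx j)
    (hτr : ∀ j, τr j ≠ 0) (hfixr : ∀ j, 1 / τr j = ∑ i, A i j ^ 2 * (qs i * τp i)) :
    frobSq (rcNormalized A τp qs τr qx) = ∑ j, qx j := by
  rw [← frobSq_transpose, rcNormalized_transpose]
  exact frobSq_rcNormalized_eq_sum_left hx hs hτr hfixr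

end RCNormalized

/-- **Sufficient condition (26) of Section V.** At GAMP fixed-point stepsizes,
`‖Ã‖_F² = m q̄_s = n q̄_x ≤ min{m,n}·max{q̄_s, q̄_x}`, so
`κ(Ã) ≥ ‖Ã‖₂²/max{q̄_s, q̄_x}`; consequently
`κ(Ã) < 1/(θ_x θ_s max{q̄_s, q̄_x})` implies `θ_s θ_x ‖Ã‖₂² < 1`. -/
theorem rc_normalized_kappa_condition {m n : ℕ}
    (A : Matrix (Fin m) (Fin n) ℝ)
    (τp : Fin m → ℝ) (hτp : ∀ i, 0 < τp i)
    (τr : Fin n → ℝ) (hτr : ∀ j, 0 < τr j)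
    (qs : Fin m → ℝ) (hqs : ∀ i, qs i ∈ Set.Ioo (0 : ℝ) 1)
    (qx : Fin n → ℝ) (hqx : ∀ j, qx j ∈ Set.Ioo (0 : ℝ) 1)
    (hfixp : ∀ i, 1 / τp i = ∑ j, (A i j) ^ 2 * (qx j * τr j))
    (hfixr : ∀ j, 1 / τr j = ∑ i, (A i j) ^ 2 * (qs i * τp i)) :
    frobSq (rcNormalized A τp qs τr qx) = (m : ℝ) * ((1 / (m : ℝ)) * ∑ i, qs i) ∧
    frobSq (rcNormalized A τp qs τr qx) = (n : ℝ) * ((1 / (n : ℝ)) * ∑ j, qx j) ∧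
    frobSq (rcNormalized A τp qs τr qx) ≤
      (min m n : ℝ) * max ((1 / (m : ℝ)) * ∑ i, qs i) ((1 / (n : ℝ)) * ∑ j, qx j) ∧
    specSq (rcNormalized A τp qs τr qx) /
        max ((1 / (m : ℝ)) * ∑ i, qs i) ((1 / (n : ℝ)) * ∑ j, qx j) ≤
      kappa (rcNormalized A τp qs τr qx) ∧
    (∀ θs θx : ℝ, θs ∈ Set.Ioc (0 : ℝ) 1 → θx ∈ Set.Ioc (0 : ℝ) 1 →
      kappa (rcNormalized A τp qs τr qx) <
        1 / (θx * θs * max ((1 / (m : ℝ)) * ∑ i, qs i) ((1 / (n : ℝ)) * ∑ j, qx j)) →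
      θs * θx * specSq (rcNormalized A τp qs τr qx) < 1) := by
  have hs : ∀ i, 0 ≤ τp i * qs i := fun i => (mul_pos (hτp i) (hqs i).1).le
  have hx : ∀ j, 0 ≤ τr j * qx j := fun j => (mul_pos (hτr j) (hqx j).1).le
  have hrows : frobSq (rcNormalized A τp qs τr qx) = (m : ℝ) * ((1 / (m : ℝ)) * ∑ i, qs i) := by
    rw [natCast_mul_one_div_mul_sum,
      frobSq_rcNormalized_eq_sum_left hs hx (fun i => (hτp i).ne') hfixp]
  have hcols : frobSq (rcNormalized A τp qs τr qx) = (n : ℝ) * ((1 / (n : ℝ)) * ∑ j, qx j) := by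
    rw [natCast_mul_one_div_mul_sum,
      frobSq_rcNormalized_eq_sum_right hs hx (fun j => (hτr j).ne') hfixr]
  have hfrob := le_min_mul_max_of_eq_mul m.cast_nonneg n.cast_nonneg hrows hcols
  have hmax : 0 ≤ max ((1 / (m : ℝ)) * ∑ i, qs i) ((1 / (n : ℝ)) * ∑ j, qx j) :=
    le_max_of_le_left (mul_nonneg (by positivity) (Finset.sum_nonneg fun i _ => (hqs i).1.le))
  have hM : frobSq (rcNormalized A τp qs τr qx) / (min m n : ℝ) ≤
      max ((1 / (m : ℝ)) * ∑ i, qs i) ((1 / (n : ℝ)) * ∑ j, qx j) :=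
    div_le_of_le_mul₀ (le_min m.cast_nonneg n.cast_nonneg) hmax (by rw [mul_comm]; exact hfrob)
  refine ⟨hrows, hcols, hfrob, specSq_div_le_kappa hM, fun θs θx hθs hθx hκ => ?_⟩
  rw [mul_comm θs]
  exact mul_specSq_lt_one_of_kappa_lt (mul_pos hθx.1 hθs.1) hM hκ
end
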